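/- arXiv:2506.02950 — 3 statements merged into one kernel-verified Lean document; each statement's English description precedes it below -/
import Mathlib

section
/- For every κ ≥ 0, the level curve γ_κ : (0, L) → ℝ given by γ_κ(z) = κ·σ(z) is differentiable on (0, L) and satisfies |γ_κ′(z)| = tan(α(γ_κ(z), z)) for all z ∈ (0, L), with γ_κ′(z) ≥ 0 for z ∈ (0, d] and γ_κ′(z) ≤ 0 for z ∈ [L−d, L). That is, the level curves of the string width are tangent to the field direction: they curve away from the axis near the quark, toward the axis near the antiquark, and are straight in the middle region. -/
/-!
Each level curve `κ σ` is again a string width, of amplitude `κ σ₀`. On `(0, d]` a string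
width `A sin (k z)` has slope `A k cos (k z) ≥ 0`; at `z = d`, where `k d = π / 2`, this slope
vanishes, so the sine glues differentiably to the plateau (or, when `d = L / 2`, to the mirrored
sine). The reflection `z ↦ L - z` transports all of this to `[L - d, L)`. Finally
`k (A sin θ) cot θ = A k cos θ`, so the absolute slope is `tan (arctan (k σ(z) cot (k z)))`.
-/

open Real Set

theorem hasDerivAt_of_eqOn_Icc_of_eqOn_Icc {F : Type*} [NormedAddCommGroup F]
    [NormedSpace ℝ F] {f g h : ℝ → F} {f' : F} {a b c : ℝ} (hab : a < b) (hbc : b < c)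
    (hfg : EqOn f g (Icc a b)) (hfh : EqOn f h (Icc b c))
    (hg : HasDerivAt g f' b) (hh : HasDerivAt h f' b) : HasDerivAt f f' b := by
  have hleft : HasDerivWithinAt f f' (Iic b) b :=
    (hg.hasDerivWithinAt.congr hfg (hfg ⟨hab.le, le_rfl⟩)).mono_of_mem_nhdsWithin
      (Icc_mem_nhdsLE hab)
  have hright : HasDerivWithinAt f f' (Ici b) b :=
    (hh.hasDerivWithinAt.congr hfh (hfh ⟨le_rfl, hbc.le⟩)).mono_of_mem_nhdsWithin
      (Icc_mem_nhdsGE hbc)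
  simpa only [Iic_union_Ici, hasDerivWithinAt_univ] using hleft.union hright

theorem hasDerivAt_mul_sin_mul (A k z : ℝ) :
    HasDerivAt (fun z => A * sin (k * z)) (A * k * cos (k * z)) z := by
  simpa [mul_comm, mul_assoc, mul_left_comm] using
    ((hasDerivAt_id z).const_mul k).sin.const_mul A

theorem abs_mul_cos_eq_tan_arctan {A k θ : ℝ} (hA : 0 ≤ A * k * cos θ) (hθ : sin θ ≠ 0) :
    |A * k * cos θ| = tan (arctan (k * (A * sin θ) * cot θ)) := by
  rw [abs_of_nonneg hA, tan_arctan, cot_eq_cos_div_sin]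
  field_simp

theorem mem_Ioc_or_mem_Icc_or_mem_Ico {α : Type*} [LinearOrder α] {a b c e x : α}
    (hx : x ∈ Ioo a b) : x ∈ Ioc a c ∨ x ∈ Icc c e ∨ x ∈ Ico e b := by
  rcases le_or_gt x c with h1 | h1
  · exact Or.inl ⟨hx.1, h1⟩
  rcases le_or_gt x e with h2 | h2
  exacts [Or.inr (Or.inl ⟨h1.le, h2⟩), Or.inr (Or.inr ⟨h2.le, hx.2⟩)]

theorem sub_mem_Ioc_of_mem_Ico {L d z : ℝ} (hz : z ∈ Ico (L - d) L) : L - z ∈ Ioc 0 d :=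
  ⟨sub_pos.2 hz.2, by linarith [hz.1]⟩

structure IsStringWidth (σ : ℝ → ℝ) (σ₀ L d k : ℝ) : Prop where
  d_pos : 0 < d
  d_le_sub : d ≤ L - d
  mul_d_eq : k * d = π / 2
  eq_left : ∀ z ∈ Icc 0 d, σ z = σ₀ * sin (k * z)
  eq_middle : ∀ z ∈ Icc d (L - d), σ z = σ₀
  eq_right : ∀ z ∈ Icc (L - d) L, σ z = σ₀ * sin (k * (L - z))

namespace IsStringWidth

variable {σ : ℝ → ℝ} {σ₀ L d k z : ℝ}

theorem const_mul (hσ : IsStringWidth σ σ₀ L d k) (κ : ℝ) :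
    IsStringWidth (fun z => κ * σ z) (κ * σ₀) L d k where
  d_pos := hσ.d_pos
  d_le_sub := hσ.d_le_sub
  mul_d_eq := hσ.mul_d_eq
  eq_left z hz := by rw [hσ.eq_left z hz, mul_assoc]
  eq_middle z hz := by rw [hσ.eq_middle z hz]
  eq_right z hz := by rw [hσ.eq_right z hz, mul_assoc]

theorem reflect (hσ : IsStringWidth σ σ₀ L d k) :
    IsStringWidth (fun z => σ (L - z)) σ₀ L d k where
  d_pos := hσ.d_pos
  d_le_sub := hσ.d_le_sub
  mul_d_eq := hσ.mul_d_eq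
  eq_left z hz := by
    rw [hσ.eq_right (L - z) ⟨by linarith [hz.2], by linarith [hz.1]⟩, sub_sub_cancel]
  eq_middle z hz := hσ.eq_middle (L - z) ⟨by linarith [hz.2], by linarith [hz.1]⟩
  eq_right z hz := hσ.eq_left (L - z) ⟨by linarith [hz.2], by linarith [hz.1]⟩

theorem mul_mem_Ioc (hσ : IsStringWidth σ σ₀ L d k) (hz : z ∈ Ioc 0 d) :
    k * z ∈ Ioc 0 (π / 2) := by
  have hk : 0 < k := pos_of_mul_pos_left (hσ.mul_d_eq ▸ by positivity) hσ.d_pos.le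
  exact ⟨mul_pos hk hz.1, hσ.mul_d_eq ▸ mul_le_mul_of_nonneg_left hz.2 hk.le⟩

theorem sin_mul_pos (hσ : IsStringWidth σ σ₀ L d k) (hz : z ∈ Ioc 0 d) :
    0 < sin (k * z) :=
  have h := hσ.mul_mem_Ioc hz
  sin_pos_of_pos_of_lt_pi h.1 (by linarith [h.2, pi_pos])

theorem slope_nonneg (hσ : IsStringWidth σ σ₀ L d k) (hσ₀ : 0 ≤ σ₀) (hz : z ∈ Ioc 0 d) :
    0 ≤ σ₀ * k * cos (k * z) := by
  have h := hσ.mul_mem_Ioc hz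
  have hk : 0 < k := pos_of_mul_pos_left h.1 hz.1.le
  exact mul_nonneg (mul_nonneg hσ₀ hk.le) (cos_nonneg_of_mem_Icc ⟨by linarith [h.1, pi_pos], h.2⟩)

theorem hasDerivAt_d (hσ : IsStringWidth σ σ₀ L d k) : HasDerivAt σ 0 d := by
  have hsin : HasDerivAt (fun z => σ₀ * sin (k * z)) 0 d := by
    simpa [hσ.mul_d_eq] using hasDerivAt_mul_sin_mul σ₀ k d
  rcases hσ.d_le_sub.lt_or_eq with hlt | heq
  · exact hasDerivAt_of_eqOn_Icc_of_eqOn_Icc hσ.d_pos hlt hσ.eq_left hσ.eq_middle hsin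
      (hasDerivAt_const d σ₀)
  · have hsin' : HasDerivAt (fun z => σ₀ * sin (k * (L - z))) 0 d := by
      simpa [← heq, hσ.mul_d_eq] using
        (hasDerivAt_mul_sin_mul σ₀ k (L - d)).comp_const_sub L d
    exact hasDerivAt_of_eqOn_Icc_of_eqOn_Icc hσ.d_pos (by linarith [hσ.d_pos]) hσ.eq_left
      (fun z hz => hσ.eq_right z ⟨heq.symm.le.trans hz.1, hz.2⟩) hsin hsin'

theorem hasDerivAt_left (hσ : IsStringWidth σ σ₀ L d k) (hz : z ∈ Ioc 0 d) :
    HasDerivAt σ (σ₀ * k * cos (k * z)) z := by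
  rcases hz.2.lt_or_eq with hlt | rfl
  · exact (hasDerivAt_mul_sin_mul σ₀ k z).congr_of_eventuallyEq
      (Filter.eventuallyEq_of_mem (Icc_mem_nhds hz.1 hlt) hσ.eq_left)
  · simpa [hσ.mul_d_eq] using hσ.hasDerivAt_d

theorem hasDerivAt_right (hσ : IsStringWidth σ σ₀ L d k) (hz : z ∈ Ico (L - d) L) :
    HasDerivAt σ (-(σ₀ * k * cos (k * (L - z)))) z := by
  simpa using (hσ.reflect.hasDerivAt_left (sub_mem_Ioc_of_mem_Ico hz)).comp_const_sub L z

theorem hasDerivAt_middle (hσ : IsStringWidth σ σ₀ L d k) (hz : z ∈ Icc d (L - d)) :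
    HasDerivAt σ 0 z := by
  rcases hz.1.eq_or_lt with rfl | h1
  · exact hσ.hasDerivAt_d
  rcases hz.2.lt_or_eq with h2 | rfl
  · exact (hasDerivAt_const z σ₀).congr_of_eventuallyEq
      (Filter.eventuallyEq_of_mem (Icc_mem_nhds h1 h2) hσ.eq_middle)
  · simpa [hσ.mul_d_eq] using hσ.hasDerivAt_right ⟨le_rfl, by linarith [hσ.d_pos]⟩

theorem differentiableAt (hσ : IsStringWidth σ σ₀ L d k) (hz : z ∈ Ioo 0 L) :
    DifferentiableAt ℝ σ z := by
  rcases mem_Ioc_or_mem_Icc_or_mem_Ico hz with hz | hz | hz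
  exacts [(hσ.hasDerivAt_left hz).differentiableAt, (hσ.hasDerivAt_middle hz).differentiableAt,
    (hσ.hasDerivAt_right hz).differentiableAt]

theorem nonneg (hσ : IsStringWidth σ σ₀ L d k) (hσ₀ : 0 ≤ σ₀) (hz : z ∈ Ioo 0 L) : 0 ≤ σ z := by
  rcases mem_Ioc_or_mem_Icc_or_mem_Ico hz with hz | hz | hz
  · rw [hσ.eq_left z (Ioc_subset_Icc_self hz)]
    exact mul_nonneg hσ₀ (hσ.sin_mul_pos hz).le
  · rwa [hσ.eq_middle z hz]
  · rw [hσ.eq_right z (Ico_subset_Icc_self hz)]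
    exact mul_nonneg hσ₀ (hσ.sin_mul_pos (sub_mem_Ioc_of_mem_Ico hz)).le

theorem abs_deriv_left (hσ : IsStringWidth σ σ₀ L d k) (hσ₀ : 0 ≤ σ₀) (hz : z ∈ Ioc 0 d) :
    |deriv σ z| = tan (arctan (k * σ z * cot (k * z))) := by
  rw [(hσ.hasDerivAt_left hz).deriv, hσ.eq_left z (Ioc_subset_Icc_self hz)]
  exact abs_mul_cos_eq_tan_arctan (hσ.slope_nonneg hσ₀ hz) (hσ.sin_mul_pos hz).ne'

theorem abs_deriv_right (hσ : IsStringWidth σ σ₀ L d k) (hσ₀ : 0 ≤ σ₀) (hz : z ∈ Ico (L - d) L) :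
    |deriv σ z| = tan (arctan (k * σ z * cot (k * (L - z)))) := by
  have hz' := sub_mem_Ioc_of_mem_Ico hz
  rw [(hσ.hasDerivAt_right hz).deriv, abs_neg, hσ.eq_right z (Ico_subset_Icc_self hz)]
  exact abs_mul_cos_eq_tan_arctan (hσ.slope_nonneg hσ₀ hz') (hσ.sin_mul_pos hz').ne'

end IsStringWidth

theorem level_curves_tangent_to_field_general
    (σ₀ L d : ℝ) (hσ₀ : 0 < σ₀) (hd : 0 < d) (hdL : d ≤ L / 2)
    (k : ℝ) (hk : k = Real.pi / (2 * d))
    (σ : ℝ → ℝ)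
    (hσ1 : ∀ z ∈ Set.Icc (0 : ℝ) d, σ z = σ₀ * Real.sin (k * z))
    (hσ2 : ∀ z ∈ Set.Icc d (L - d), σ z = σ₀)
    (hσ3 : ∀ z ∈ Set.Icc (L - d) L, σ z = σ₀ * Real.sin (k * (L - z)))
    (α : ℝ → ℝ → ℝ)
    (hα1 : ∀ xp : ℝ, 0 ≤ xp → ∀ z ∈ Set.Ioc (0 : ℝ) d,
      α xp z = Real.arctan (k * xp * Real.cot (k * z)))
    (hα2 : ∀ xp : ℝ, 0 ≤ xp → ∀ z ∈ Set.Icc d (L - d), α xp z = 0)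
    (hα3 : ∀ xp : ℝ, 0 ≤ xp → ∀ z ∈ Set.Ico (L - d) L,
      α xp z = Real.arctan (k * xp * Real.cot (k * (L - z)))) :
    ∀ κ : ℝ, 0 ≤ κ →
      (∀ z ∈ Set.Ioo (0 : ℝ) L,
        DifferentiableAt ℝ (fun z => κ * σ z) z ∧
        |deriv (fun z => κ * σ z) z| = Real.tan (α (κ * σ z) z)) ∧
      (∀ z ∈ Set.Ioc (0 : ℝ) d, 0 ≤ deriv (fun z => κ * σ z) z) ∧
      (∀ z ∈ Set.Ico (L - d) L, deriv (fun z => κ * σ z) z ≤ 0) := by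
  intro κ hκ
  have hγ : IsStringWidth (fun z => κ * σ z) (κ * σ₀) L d k :=
    .const_mul ⟨hd, by linarith, by rw [hk]; field_simp, hσ1, hσ2, hσ3⟩ κ
  have hA : 0 ≤ κ * σ₀ := by positivity
  refine ⟨fun z hz => ⟨hγ.differentiableAt hz, ?_⟩, fun z hz => ?_, fun z hz => ?_⟩
  · have hγz : 0 ≤ κ * σ z := hγ.nonneg hA hz
    rcases mem_Ioc_or_mem_Icc_or_mem_Ico hz with hz | hz | hz
    · rw [hα1 _ hγz z hz]
      exact hγ.abs_deriv_left hA hz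
    · rw [hα2 _ hγz z hz, (hγ.hasDerivAt_middle hz).deriv, abs_zero, tan_zero]
    · rw [hα3 _ hγz z hz]
      exact hγ.abs_deriv_right hA hz
  · rw [(hγ.hasDerivAt_left hz).deriv]
    exact hγ.slope_nonneg hA hz
  · rw [(hγ.hasDerivAt_right hz).deriv, neg_nonpos]
    exact hγ.slope_nonneg hA (sub_mem_Ioc_of_mem_Ico hz)

/-- For every `κ ≥ 0` the level curve `γ_κ(z) = κ * σ(z)` is
differentiable on `(0, L)` with `|γ_κ'(z)| = tan (α (γ_κ(z)) z)` there; moreover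
`γ_κ' ≥ 0` on `(0, d]` (curving away from the axis near the quark) and `γ_κ' ≤ 0` on
`[L - d, L)` (curving toward the axis near the antiquark). -/
theorem level_curves_tangent_to_field
    (σ₀ L d : ℝ) (hσ₀ : 0 < σ₀) (hL : 0 < L) (hd : 0 < d) (hdL : d ≤ L / 2)
    (k : ℝ) (hk : k = Real.pi / (2 * d)) (D : ℕ) (hD : 1 ≤ D)
    (σ : ℝ → ℝ)
    (hσ1 : ∀ z ∈ Set.Icc (0 : ℝ) d, σ z = σ₀ * Real.sin (k * z))
    (hσ2 : ∀ z ∈ Set.Icc d (L - d), σ z = σ₀)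
    (hσ3 : ∀ z ∈ Set.Icc (L - d) L, σ z = σ₀ * Real.sin (k * (L - z)))
    (hσ4 : ∀ z, z ∉ Set.Icc (0 : ℝ) L → σ z = 0)
    (α : ℝ → ℝ → ℝ)
    (hα1 : ∀ xp : ℝ, 0 ≤ xp → ∀ z ∈ Set.Ioc (0 : ℝ) d,
      α xp z = Real.arctan (k * xp * Real.cot (k * z)))
    (hα2 : ∀ xp : ℝ, 0 ≤ xp → ∀ z ∈ Set.Icc d (L - d), α xp z = 0)
    (hα3 : ∀ xp : ℝ, 0 ≤ xp → ∀ z ∈ Set.Ico (L - d) L,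
      α xp z = Real.arctan (k * xp * Real.cot (k * (L - z)))) :
    ∀ κ : ℝ, 0 ≤ κ →
      (∀ z ∈ Set.Ioo (0 : ℝ) L,
        DifferentiableAt ℝ (fun z => κ * σ z) z ∧
        |deriv (fun z => κ * σ z) z| = Real.tan (α (κ * σ z) z)) ∧
      (∀ z ∈ Set.Ioc (0 : ℝ) d, 0 ≤ deriv (fun z => κ * σ z) z) ∧
      (∀ z ∈ Set.Ico (L - d) L, deriv (fun z => κ * σ z) z ≤ 0) :=
  level_curves_tangent_to_field_general σ₀ L d hσ₀ hd hdL k hk σ hσ1 hσ2 hσ3 α hα1 hα2 hα3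
end

section
/- For every κ > 0 and every z ∈ (0, L), the flux element of the realized interaction field along the stream tube bounded by the level curve x⊥ = κ·σ(z) satisfies E(κ·σ(z), z)·cos(α(κ·σ(z), z))·(κ·σ(z))^{D−1}·σ(z) = exp(−κ²/2)·κ^{D−1}; in particular this quantity is independent of z, so the realized interaction field conserves flux along stream tubes (Property 2 of a proper interaction field). -/
/-! Along the level curve `x⊥ = κ σ(z)` the Gaussian factor is the constant `exp (-κ²/2)`, the
factor `cos α` cancels, and `(κ σ)^(D-1) σ` cancels `σ^D`. All that has to be checked is that
`σ(z)` and `cos α` do not vanish on `(0, L)`: `σ` is a positive multiple of a sine evaluated in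
`(0, π/2]`, and `α` is an arctangent or zero. -/

open Real Set

lemma mem_Ioc_or_mem_Icc_or_mem_Ico_s5 {a b b' c z : ℝ} (hz : z ∈ Ioo a c) :
    z ∈ Ioc a b ∨ z ∈ Icc b b' ∨ z ∈ Ico b' c := by
  rcases le_or_gt z b with hb | hb
  · exact Or.inl ⟨hz.1, hb⟩
  rcases le_or_gt z b' with hb' | hb'
  · exact Or.inr (Or.inl ⟨hb.le, hb'⟩)
  · exact Or.inr (Or.inr ⟨hb'.le, hz.2⟩)

lemma sin_pi_div_two_mul_div_pos {d t : ℝ} (hd : 0 < d) (ht : t ∈ Ioc 0 d) :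
    0 < sin (π / (2 * d) * t) := by
  have hle : π / (2 * d) * t ≤ π / 2 := by
    calc π / (2 * d) * t ≤ π / (2 * d) * d := by gcongr; exact ht.2
      _ = π / 2 := by field_simp
  exact sin_pos_of_pos_of_lt_pi (by have := ht.1; positivity) (by linarith [pi_pos])

lemma gaussian_flux_element_eq {s c κ : ℝ} (hs : s ≠ 0) (hc : c ≠ 0) {D : ℕ} (hD : 1 ≤ D) :
    exp (-(κ * s) ^ 2 / (2 * s ^ 2)) / (s ^ D * c) * c * (κ * s) ^ (D - 1) * s =
      exp (-κ ^ 2 / 2) * κ ^ (D - 1) := by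
  obtain ⟨m, rfl⟩ := Nat.exists_eq_add_of_le' hD
  have hexp : -(κ * s) ^ 2 / (2 * s ^ 2) = -κ ^ 2 / 2 := by field_simp
  rw [hexp, Nat.add_sub_cancel]
  field_simp
  ring

theorem flux_conservation_along_stream_tubes_general
    (σ₀ L d : ℝ) (hσ₀ : 0 < σ₀) (hd : 0 < d)
    (k : ℝ) (hk : k = Real.pi / (2 * d)) (D : ℕ) (hD : 1 ≤ D)
    (σ : ℝ → ℝ)
    (hσ1 : ∀ z ∈ Set.Icc (0 : ℝ) d, σ z = σ₀ * Real.sin (k * z))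
    (hσ2 : ∀ z ∈ Set.Icc d (L - d), σ z = σ₀)
    (hσ3 : ∀ z ∈ Set.Icc (L - d) L, σ z = σ₀ * Real.sin (k * (L - z)))
    (α : ℝ → ℝ → ℝ)
    (hα1 : ∀ xp : ℝ, 0 ≤ xp → ∀ z ∈ Set.Ioc (0 : ℝ) d,
      α xp z = Real.arctan (k * xp * Real.cot (k * z)))
    (hα2 : ∀ xp : ℝ, 0 ≤ xp → ∀ z ∈ Set.Icc d (L - d), α xp z = 0)
    (hα3 : ∀ xp : ℝ, 0 ≤ xp → ∀ z ∈ Set.Ico (L - d) L,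
      α xp z = Real.arctan (k * xp * Real.cot (k * (L - z))))
    (E : ℝ → ℝ → ℝ)
    (hE : ∀ xp : ℝ, 0 ≤ xp → ∀ z ∈ Set.Ioo (0 : ℝ) L,
      E xp z = Real.exp (-(xp ^ 2) / (2 * (σ z) ^ 2)) / ((σ z) ^ D * Real.cos (α xp z))) :
    ∀ κ : ℝ, 0 < κ → ∀ z ∈ Set.Ioo (0 : ℝ) L,
      E (κ * σ z) z * Real.cos (α (κ * σ z) z) * (κ * σ z) ^ (D - 1) * σ z =
        Real.exp (-(κ ^ 2) / 2) * κ ^ (D - 1) := by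
  intro κ hκ z hz
  subst hk
  have hσz : 0 < σ z := by
    rcases mem_Ioc_or_mem_Icc_or_mem_Ico_s5 (b := d) (b' := L - d) hz with h | h | h
    · rw [hσ1 z (Ioc_subset_Icc_self h)]
      exact mul_pos hσ₀ (sin_pi_div_two_mul_div_pos hd h)
    · rwa [hσ2 z h]
    · rw [hσ3 z (Ico_subset_Icc_self h)]
      exact mul_pos hσ₀ (sin_pi_div_two_mul_div_pos hd ⟨by linarith [h.2], by linarith [h.1]⟩)
  have hxp : 0 ≤ κ * σ z := by positivity
  have hcos : 0 < cos (α (κ * σ z) z) := by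
    rcases mem_Ioc_or_mem_Icc_or_mem_Ico_s5 (b := d) (b' := L - d) hz with h | h | h
    · rw [hα1 _ hxp z h]; exact cos_arctan_pos _
    · rw [hα2 _ hxp z h, cos_zero]; exact one_pos
    · rw [hα3 _ hxp z h]; exact cos_arctan_pos _
  rw [hE _ hxp z hz]
  exact gaussian_flux_element_eq hσz.ne' hcos.ne' hD

/-- For every `κ > 0` and every `z ∈ (0, L)`, the flux element of the
realized interaction field along the stream tube bounded by the level curve
`xp = κ σ(z)` satisfies
`E(κσ(z), z) * cos (α(κσ(z), z)) * (κσ(z))^(D-1) * σ(z) = exp (-κ²/2) * κ^(D-1)`,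
a quantity independent of `z`: the field conserves flux along stream tubes
(Property 2 of a proper interaction field). -/
theorem flux_conservation_along_stream_tubes
    (σ₀ L d : ℝ) (hσ₀ : 0 < σ₀) (hL : 0 < L) (hd : 0 < d) (hdL : d ≤ L / 2)
    (k : ℝ) (hk : k = Real.pi / (2 * d)) (D : ℕ) (hD : 1 ≤ D)
    (σ : ℝ → ℝ)
    (hσ1 : ∀ z ∈ Set.Icc (0 : ℝ) d, σ z = σ₀ * Real.sin (k * z))
    (hσ2 : ∀ z ∈ Set.Icc d (L - d), σ z = σ₀)
    (hσ3 : ∀ z ∈ Set.Icc (L - d) L, σ z = σ₀ * Real.sin (k * (L - z)))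
    (hσ4 : ∀ z, z ∉ Set.Icc (0 : ℝ) L → σ z = 0)
    (α : ℝ → ℝ → ℝ)
    (hα1 : ∀ xp : ℝ, 0 ≤ xp → ∀ z ∈ Set.Ioc (0 : ℝ) d,
      α xp z = Real.arctan (k * xp * Real.cot (k * z)))
    (hα2 : ∀ xp : ℝ, 0 ≤ xp → ∀ z ∈ Set.Icc d (L - d), α xp z = 0)
    (hα3 : ∀ xp : ℝ, 0 ≤ xp → ∀ z ∈ Set.Ico (L - d) L,
      α xp z = Real.arctan (k * xp * Real.cot (k * (L - z))))
    (E : ℝ → ℝ → ℝ)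
    (hE : ∀ xp : ℝ, 0 ≤ xp → ∀ z ∈ Set.Ioo (0 : ℝ) L,
      E xp z = Real.exp (-(xp ^ 2) / (2 * (σ z) ^ 2)) / ((σ z) ^ D * Real.cos (α xp z))) :
    ∀ κ : ℝ, 0 < κ → ∀ z ∈ Set.Ioo (0 : ℝ) L,
      E (κ * σ z) z * Real.cos (α (κ * σ z) z) * (κ * σ z) ^ (D - 1) * σ z =
        Real.exp (-(κ ^ 2) / 2) * κ ^ (D - 1) :=
  flux_conservation_along_stream_tubes_general σ₀ L d hσ₀ hd k hk D hD σ hσ1 hσ2 hσ3 α hα1 hα2 hα3 E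
    hE
end

section
/- Define the vector field F on ℝ^D × (0, L) ⊆ ℝ^{D+1} by F(x, z) = E(‖x‖, z)·( sin(α(‖x‖, z))·x/‖x‖ , cos(α(‖x‖, z)) ) for x ≠ 0 and F(0, z) = E(0, z)·(0, 1). Let I ⊆ ℝ be a nontrivial interval and let γ = (γ_x, γ_z) : I → ℝ^D × (0, L) be a differentiable curve with γ′(t) = F(γ(t)) for all t ∈ I. Then the z-coordinate γ_z is strictly monotonically increasing on I. In particular no trajectory of the realized interaction field moves backwards in z, so there are no backward-oriented field lines. -/
/-!
The `z`-component of the field is `E · cos α`. The width `σ` is positive on `(0, L)`, because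
`k z` and `k (L - z)` stay in `(0, π/2]` on the two end caps, and `α` is either `0` or an
arctangent, so `cos α > 0`; hence `E > 0`. Along a trajectory `γ_z` therefore has positive
derivative on the interval `I`, and the mean value theorem makes it strictly increasing.
-/

open Real Set

lemma strictMonoOn_of_hasDerivAt_pos {I : Set ℝ} (hI : I.OrdConnected) {f f' : ℝ → ℝ}
    (hf : ∀ t ∈ I, HasDerivAt f (f' t) t) (hf' : ∀ t ∈ I, 0 < f' t) : StrictMonoOn f I :=
  strictMonoOn_of_deriv_pos hI.convex (fun t ht => (hf t ht).continuousAt.continuousWithinAt)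
    fun t ht => (hf t (interior_subset ht)).deriv ▸ hf' t (interior_subset ht)

lemma sin_mul_pos_of_mem_Ioc {k d z : ℝ} (hk : 0 < k) (hkd : k * d = π / 2) (hz : z ∈ Ioc 0 d) :
    0 < sin (k * z) :=
  sin_pos_of_pos_of_lt_pi (mul_pos hk hz.1) (by nlinarith [pi_pos, hz.2])

lemma string_width_pos {σ : ℝ → ℝ} {σ₀ L d k : ℝ} (hσ₀ : 0 < σ₀) (hk : 0 < k)
    (hkd : k * d = π / 2)
    (hσ1 : ∀ z ∈ Icc 0 d, σ z = σ₀ * sin (k * z))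
    (hσ2 : ∀ z ∈ Icc d (L - d), σ z = σ₀)
    (hσ3 : ∀ z ∈ Icc (L - d) L, σ z = σ₀ * sin (k * (L - z)))
    {z : ℝ} (hz : z ∈ Ioo 0 L) : 0 < σ z := by
  rcases le_or_gt z d with hzd | hdz
  · rw [hσ1 z ⟨hz.1.le, hzd⟩]
    exact mul_pos hσ₀ (sin_mul_pos_of_mem_Ioc hk hkd ⟨hz.1, hzd⟩)
  rcases le_or_gt z (L - d) with hzL | hLz
  · rw [hσ2 z ⟨hdz.le, hzL⟩]
    exact hσ₀
  · rw [hσ3 z ⟨hLz.le, hz.2.le⟩]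
    exact mul_pos hσ₀ (sin_mul_pos_of_mem_Ioc hk hkd ⟨by linarith [hz.2], by linarith⟩)

lemma cos_string_angle_pos {α : ℝ → ℝ → ℝ} {L d k : ℝ}
    (hα1 : ∀ xp : ℝ, 0 ≤ xp → ∀ z ∈ Ioc 0 d, α xp z = arctan (k * xp * cot (k * z)))
    (hα2 : ∀ xp : ℝ, 0 ≤ xp → ∀ z ∈ Icc d (L - d), α xp z = 0)
    (hα3 : ∀ xp : ℝ, 0 ≤ xp → ∀ z ∈ Ico (L - d) L,
      α xp z = arctan (k * xp * cot (k * (L - z))))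
    {xp z : ℝ} (hxp : 0 ≤ xp) (hz : z ∈ Ioo 0 L) : 0 < cos (α xp z) := by
  rcases le_or_gt z d with hzd | hdz
  · rw [hα1 xp hxp z ⟨hz.1, hzd⟩]
    exact cos_arctan_pos _
  rcases le_or_gt z (L - d) with hzL | hLz
  · rw [hα2 xp hxp z ⟨hdz.le, hzL⟩, cos_zero]
    exact one_pos
  · rw [hα3 xp hxp z ⟨hLz.le, hz.2⟩]
    exact cos_arctan_pos _

lemma field_magnitude_pos {σ : ℝ → ℝ} {α E : ℝ → ℝ → ℝ} {L : ℝ} {D : ℕ}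
    (hE : ∀ xp : ℝ, 0 ≤ xp → ∀ z ∈ Ioo 0 L,
      E xp z = exp (-(xp ^ 2) / (2 * (σ z) ^ 2)) / ((σ z) ^ D * cos (α xp z)))
    {xp z : ℝ} (hxp : 0 ≤ xp) (hz : z ∈ Ioo 0 L) (hσ : 0 < σ z) (hcos : 0 < cos (α xp z)) :
    0 < E xp z := by
  rw [hE xp hxp z hz]
  positivity

lemma field_snd_pos {V : Type*} [NormedAddCommGroup V] [NormedSpace ℝ V]
    {α E : ℝ → ℝ → ℝ} {L : ℝ} {F : V × ℝ → V × ℝ}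
    (hF0 : ∀ z ∈ Ioo 0 L, F (0, z) = (0, E 0 z))
    (hF : ∀ x : V, x ≠ 0 → ∀ z ∈ Ioo 0 L,
      F (x, z) = ((E ‖x‖ z * sin (α ‖x‖ z) / ‖x‖) • x, E ‖x‖ z * cos (α ‖x‖ z)))
    (hE : ∀ xp : ℝ, 0 ≤ xp → ∀ z ∈ Ioo 0 L, 0 < E xp z)
    (hcos : ∀ xp : ℝ, 0 ≤ xp → ∀ z ∈ Ioo 0 L, 0 < cos (α xp z))
    {p : V × ℝ} (hp : p.2 ∈ Ioo 0 L) : 0 < (F p).2 := by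
  obtain ⟨x, z⟩ := p
  by_cases hx : x = 0
  · rw [hx, hF0 z hp]
    exact hE 0 le_rfl z hp
  · rw [hF x hx z hp]
    exact mul_pos (hE _ (norm_nonneg x) z hp) (hcos _ (norm_nonneg x) z hp)

theorem no_backward_oriented_trajectories_general
    (σ₀ L d : ℝ) (hσ₀ : 0 < σ₀) (hd : 0 < d)
    (k : ℝ) (hk : k = Real.pi / (2 * d)) (D : ℕ)
    (σ : ℝ → ℝ)
    (hσ1 : ∀ z ∈ Set.Icc (0 : ℝ) d, σ z = σ₀ * Real.sin (k * z))
    (hσ2 : ∀ z ∈ Set.Icc d (L - d), σ z = σ₀)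
    (hσ3 : ∀ z ∈ Set.Icc (L - d) L, σ z = σ₀ * Real.sin (k * (L - z)))
    (α : ℝ → ℝ → ℝ)
    (hα1 : ∀ xp : ℝ, 0 ≤ xp → ∀ z ∈ Set.Ioc (0 : ℝ) d,
      α xp z = Real.arctan (k * xp * Real.cot (k * z)))
    (hα2 : ∀ xp : ℝ, 0 ≤ xp → ∀ z ∈ Set.Icc d (L - d), α xp z = 0)
    (hα3 : ∀ xp : ℝ, 0 ≤ xp → ∀ z ∈ Set.Ico (L - d) L,
      α xp z = Real.arctan (k * xp * Real.cot (k * (L - z))))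
    (E : ℝ → ℝ → ℝ)
    (hE : ∀ xp : ℝ, 0 ≤ xp → ∀ z ∈ Set.Ioo (0 : ℝ) L,
      E xp z = Real.exp (-(xp ^ 2) / (2 * (σ z) ^ 2)) / ((σ z) ^ D * Real.cos (α xp z)))
    (F : EuclideanSpace ℝ (Fin D) × ℝ → EuclideanSpace ℝ (Fin D) × ℝ)
    (hF0 : ∀ z ∈ Set.Ioo (0 : ℝ) L, F (0, z) = (0, E 0 z))
    (hF : ∀ x : EuclideanSpace ℝ (Fin D), x ≠ 0 → ∀ z ∈ Set.Ioo (0 : ℝ) L,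
      F (x, z) = ((E ‖x‖ z * Real.sin (α ‖x‖ z) / ‖x‖) • x,
        E ‖x‖ z * Real.cos (α ‖x‖ z)))
    (I : Set ℝ) (hI : I.OrdConnected)
    (γ : ℝ → EuclideanSpace ℝ (Fin D) × ℝ)
    (hγmem : ∀ t ∈ I, (γ t).2 ∈ Set.Ioo (0 : ℝ) L)
    (hγderiv : ∀ t ∈ I, HasDerivAt γ (F (γ t)) t) :
    StrictMonoOn (fun t => (γ t).2) I := by
  have hk_pos : 0 < k := by
    rw [hk]
    positivity
  have hkd : k * d = π / 2 := by
    rw [hk]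
    field_simp
  have hcos_pos : ∀ xp : ℝ, 0 ≤ xp → ∀ z ∈ Ioo 0 L, 0 < cos (α xp z) :=
    fun _ hxp _ hz => cos_string_angle_pos hα1 hα2 hα3 hxp hz
  have hE_pos : ∀ xp : ℝ, 0 ≤ xp → ∀ z ∈ Ioo 0 L, 0 < E xp z := fun xp hxp z hz =>
    field_magnitude_pos hE hxp hz (string_width_pos hσ₀ hk_pos hkd hσ1 hσ2 hσ3 hz)
      (hcos_pos xp hxp z hz)
  exact strictMonoOn_of_hasDerivAt_pos hI (fun t ht => (hγderiv t ht).snd)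
    fun t ht => field_snd_pos hF0 hF hE_pos hcos_pos (hγmem t ht)

/-- Along any differentiable trajectory `γ` of the realized
interaction field `F` on `ℝ^D × (0, L)` (with `F(x, z)` given in cylindrical form by
the field magnitude `E` and the string angle `α`), the `z`-coordinate is strictly
increasing: no trajectory moves backwards in `z`, so there are no backward-oriented
field lines. -/
theorem no_backward_oriented_trajectories
    (σ₀ L d : ℝ) (hσ₀ : 0 < σ₀) (hL : 0 < L) (hd : 0 < d) (hdL : d ≤ L / 2)
    (k : ℝ) (hk : k = Real.pi / (2 * d)) (D : ℕ) (hD : 1 ≤ D)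
    (σ : ℝ → ℝ)
    (hσ1 : ∀ z ∈ Set.Icc (0 : ℝ) d, σ z = σ₀ * Real.sin (k * z))
    (hσ2 : ∀ z ∈ Set.Icc d (L - d), σ z = σ₀)
    (hσ3 : ∀ z ∈ Set.Icc (L - d) L, σ z = σ₀ * Real.sin (k * (L - z)))
    (hσ4 : ∀ z, z ∉ Set.Icc (0 : ℝ) L → σ z = 0)
    (α : ℝ → ℝ → ℝ)
    (hα1 : ∀ xp : ℝ, 0 ≤ xp → ∀ z ∈ Set.Ioc (0 : ℝ) d,
      α xp z = Real.arctan (k * xp * Real.cot (k * z)))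
    (hα2 : ∀ xp : ℝ, 0 ≤ xp → ∀ z ∈ Set.Icc d (L - d), α xp z = 0)
    (hα3 : ∀ xp : ℝ, 0 ≤ xp → ∀ z ∈ Set.Ico (L - d) L,
      α xp z = Real.arctan (k * xp * Real.cot (k * (L - z))))
    (E : ℝ → ℝ → ℝ)
    (hE : ∀ xp : ℝ, 0 ≤ xp → ∀ z ∈ Set.Ioo (0 : ℝ) L,
      E xp z = Real.exp (-(xp ^ 2) / (2 * (σ z) ^ 2)) / ((σ z) ^ D * Real.cos (α xp z)))
    (F : EuclideanSpace ℝ (Fin D) × ℝ → EuclideanSpace ℝ (Fin D) × ℝ)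
    (hF0 : ∀ z ∈ Set.Ioo (0 : ℝ) L, F (0, z) = (0, E 0 z))
    (hF : ∀ x : EuclideanSpace ℝ (Fin D), x ≠ 0 → ∀ z ∈ Set.Ioo (0 : ℝ) L,
      F (x, z) = ((E ‖x‖ z * Real.sin (α ‖x‖ z) / ‖x‖) • x,
        E ‖x‖ z * Real.cos (α ‖x‖ z)))
    (I : Set ℝ) (hI : I.OrdConnected) (hInt : I.Nontrivial)
    (γ : ℝ → EuclideanSpace ℝ (Fin D) × ℝ)
    (hγmem : ∀ t ∈ I, (γ t).2 ∈ Set.Ioo (0 : ℝ) L)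
    (hγderiv : ∀ t ∈ I, HasDerivAt γ (F (γ t)) t) :
    StrictMonoOn (fun t => (γ t).2) I :=
  no_backward_oriented_trajectories_general σ₀ L d hσ₀ hd k hk D σ hσ1 hσ2 hσ3 α hα1 hα2 hα3 E hE F
    hF0 hF I hI γ hγmem hγderiv
end
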